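/- (Forward direction of Proposition 1) Let two switching signals σ, σ' induce block matrices A^σ, B^σ, C^σ and A^{σ'}, B^{σ'}, C^{σ'} satisfying A^σ(:t) = A^{σ'}(:t), B^σ(:t) = B^{σ'}(:t), C^σ(:t) = C^{σ'}(:t), and let block lower triangular controllers K^σ, K^{σ'} satisfy K^σ(:t) = K^{σ'}(:t). Then the induced system response maps satisfy Φ^σ_xx(:t) = Φ^{σ'}_xx(:t), Φ^σ_xy(:t) = Φ^{σ'}_xy(:t), Φ^σ_ux(:t) = Φ^{σ'}_ux(:t), and Φ^σ_uy(:t) = Φ^{σ'}_uy(:t). -/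
import Mathlib


open Matrix MeasureTheory

/-- A matrix with `(T+1)×(T+1)` blocks is block lower triangular if every block
strictly above the block diagonal is zero. -/
def IsBLT {T a b : ℕ} (M : Matrix (Fin (T+1) × Fin a) (Fin (T+1) × Fin b) ℝ) : Prop :=
  ∀ p q, p.1 < q.1 → M p q = 0

/-- Strictly block lower triangular: all blocks on and above the block diagonal vanish. -/
def IsStrictBLT {T a b : ℕ} (M : Matrix (Fin (T+1) × Fin a) (Fin (T+1) × Fin b) ℝ) : Prop :=
  ∀ p q, p.1 ≤ q.1 → M p q = 0

/-- Block diagonal: off-diagonal blocks vanish. -/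
def IsBD {T a b : ℕ} (M : Matrix (Fin (T+1) × Fin a) (Fin (T+1) × Fin b) ℝ) : Prop :=
  ∀ p q, p.1 ≠ q.1 → M p q = 0

/-- `lead t ht M` is the leading principal block submatrix `M(:t)` consisting of the first
`t+1` block rows and block columns of `M`. -/
def lead {T a b : ℕ} (t : ℕ) (ht : t + 1 ≤ T + 1)
    (M : Matrix (Fin (T+1) × Fin a) (Fin (T+1) × Fin b) ℝ) :
    Matrix (Fin (t+1) × Fin a) (Fin (t+1) × Fin b) ℝ :=
  M.submatrix (Prod.map (Fin.castLE ht) id) (Prod.map (Fin.castLE ht) id)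

/-- The block downshift operator: `T` identity `n×n` blocks on the first block subdiagonal,
zeros elsewhere. -/
def dshift (n T : ℕ) : Matrix (Fin (T+1) × Fin n) (Fin (T+1) × Fin n) ℝ :=
  fun p q => if (p.1 : ℕ) = (q.1 : ℕ) + 1 ∧ p.2 = q.2 then 1 else 0

-- helper lemmas
lemma IsBLT.mul' {T a b c : ℕ} {M : Matrix (Fin (T+1) × Fin a) (Fin (T+1) × Fin b) ℝ}
    {N : Matrix (Fin (T+1) × Fin b) (Fin (T+1) × Fin c) ℝ}
    (hM : IsBLT M) (hN : IsBLT N) : IsBLT (M * N) := by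
  intro p q h
  rw [Matrix.mul_apply]
  apply Finset.sum_eq_zero
  intro r _
  by_cases h1 : p.1 < r.1
  · rw [hM _ _ h1, zero_mul]
  · rw [hN _ _ (lt_of_le_of_lt (not_lt.mp h1) h), mul_zero]

lemma IsBLT.one {T a : ℕ} : IsBLT (1 : Matrix (Fin (T+1) × Fin a) (Fin (T+1) × Fin a) ℝ) := by
  intro p q h
  rw [Matrix.one_apply_ne]
  rintro rfl; exact lt_irrefl _ h

lemma lead_mul_eq {T a b c t : ℕ} (ht : t + 1 ≤ T + 1)
    {M M' : Matrix (Fin (T+1) × Fin a) (Fin (T+1) × Fin b) ℝ}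
    {N N' : Matrix (Fin (T+1) × Fin b) (Fin (T+1) × Fin c) ℝ}
    (hM : IsBLT M) (hM' : IsBLT M')
    (heM : lead t ht M = lead t ht M') (heN : lead t ht N = lead t ht N') :
    lead t ht (M * N) = lead t ht (M' * N') := by
  ext ⟨i, x⟩ ⟨j, y⟩
  simp only [lead, submatrix_apply, Prod.map, Matrix.mul_apply, id]
  apply Finset.sum_congr rfl
  rintro ⟨r, z⟩ -
  by_cases hr : (r : ℕ) ≤ t
  · have hr' : (r : ℕ) < t + 1 := Nat.lt_succ_of_le hr
    have hcast : Fin.castLE ht (⟨(r : ℕ), hr'⟩ : Fin (t+1)) = r := by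
      apply Fin.ext; rfl
    have h1 : M (Fin.castLE ht i, x) (r, z) = M' (Fin.castLE ht i, x) (r, z) := by
      have := congrFun (congrFun heM (i, x)) (⟨(r : ℕ), hr'⟩, z)
      simpa [lead, hcast] using this
    have h2 : N (r, z) (Fin.castLE ht j, y) = N' (r, z) (Fin.castLE ht j, y) := by
      have := congrFun (congrFun heN (⟨(r : ℕ), hr'⟩, z)) (j, y)
      simpa [lead, hcast] using this
    rw [h1, h2]
  · have hlt : ((Fin.castLE ht i, x) : Fin (T+1) × Fin a).1 < r := by
      have : (i : ℕ) < t + 1 := i.isLt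
      exact Fin.lt_def.mpr (by simp only [Fin.coe_castLE]; omega)
    rw [hM _ (r, z) hlt, hM' _ (r, z) hlt, zero_mul, zero_mul]

lemma lead_add' {T a b t : ℕ} (ht : t + 1 ≤ T + 1)
    (M N : Matrix (Fin (T+1) × Fin a) (Fin (T+1) × Fin b) ℝ) :
    lead t ht (M + N) = lead t ht M + lead t ht N := rfl

lemma lead_sum' {T a b t : ℕ} (ht : t + 1 ≤ T + 1) {ι : Type*} (s : Finset ι)
    (f : ι → Matrix (Fin (T+1) × Fin a) (Fin (T+1) × Fin b) ℝ) :
    lead t ht (∑ k ∈ s, f k) = ∑ k ∈ s, lead t ht (f k) := by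
  ext p q
  simp [lead, Matrix.sum_apply]

lemma strict_pow_zero {T a : ℕ} {N : Matrix (Fin (T+1) × Fin a) (Fin (T+1) × Fin a) ℝ}
    (hN : IsStrictBLT N) : ∀ k p q, (p.1 : ℕ) < (q.1 : ℕ) + k → (N ^ k) p q = 0 := by
  intro k
  induction k with
  | zero =>
    intro p q h
    rw [pow_zero, Matrix.one_apply_ne]
    intro hpq
    rw [hpq] at h; omega
  | succ k ih =>
    intro p q h
    rw [pow_succ, Matrix.mul_apply]
    apply Finset.sum_eq_zero
    intro r _
    by_cases h1 : (p.1 : ℕ) < (r.1 : ℕ) + k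
    · rw [ih p r h1, zero_mul]
    · have hle : (r.1 : ℕ) ≤ (q.1 : ℕ) := by omega
      rw [hN r q (Fin.le_def.mpr hle), mul_zero]

lemma IsStrictBLT.blt {T a b : ℕ} {M : Matrix (Fin (T+1) × Fin a) (Fin (T+1) × Fin b) ℝ}
    (h : IsStrictBLT M) : IsBLT M := fun p q hpq => h p q (le_of_lt hpq)

lemma IsBD.blt {T a b : ℕ} {M : Matrix (Fin (T+1) × Fin a) (Fin (T+1) × Fin b) ℝ}
    (h : IsBD M) : IsBLT M := fun p q hpq => h p q (ne_of_lt hpq)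

lemma IsBLT.add' {T a b : ℕ} {M N : Matrix (Fin (T+1) × Fin a) (Fin (T+1) × Fin b) ℝ}
    (hM : IsBLT M) (hN : IsBLT N) : IsBLT (M + N) := by
  intro p q h
  simp [Matrix.add_apply, hM p q h, hN p q h]

lemma IsStrictBLT.mulBLT {T a b c : ℕ} {M : Matrix (Fin (T+1) × Fin a) (Fin (T+1) × Fin b) ℝ}
    {N : Matrix (Fin (T+1) × Fin b) (Fin (T+1) × Fin c) ℝ}
    (hM : IsStrictBLT M) (hN : IsBLT N) : IsStrictBLT (M * N) := by
  intro p q h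
  rw [Matrix.mul_apply]
  apply Finset.sum_eq_zero
  intro r _
  by_cases h1 : p.1 ≤ r.1
  · rw [hM _ _ h1, zero_mul]
  · rw [hN _ _ (lt_of_lt_of_le (not_le.mp h1) h), mul_zero]

lemma IsBLT.pow' {T a : ℕ} {N : Matrix (Fin (T+1) × Fin a) (Fin (T+1) × Fin a) ℝ}
    (hN : IsBLT N) : ∀ k, IsBLT (N ^ k) := by
  intro k
  induction k with
  | zero => rw [pow_zero]; exact IsBLT.one
  | succ k ih => rw [pow_succ]; exact ih.mul' hN

lemma IsBLT.sumpow {T a : ℕ} {N : Matrix (Fin (T+1) × Fin a) (Fin (T+1) × Fin a) ℝ}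
    (hN : IsBLT N) : IsBLT (∑ k ∈ Finset.range (T+1), N ^ k) := by
  intro p q h
  rw [Matrix.sum_apply]
  exact Finset.sum_eq_zero fun k _ => hN.pow' k p q h

lemma strict_inv_eq_geom {T a : ℕ} {N : Matrix (Fin (T+1) × Fin a) (Fin (T+1) × Fin a) ℝ}
    (hN : IsStrictBLT N) :
    (1 - N)⁻¹ = ∑ k ∈ Finset.range (T+1), N ^ k := by
  apply Matrix.inv_eq_right_inv
  rw [mul_eq_one_comm]
  have hnil : N ^ (T+1) = 0 := by
    ext p q
    exact strict_pow_zero hN (T+1) p q (by have := p.1.isLt; omega)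
  have h := geom_sum_mul N (T+1)
  rw [hnil] at h
  have : (∑ k ∈ Finset.range (T+1), N ^ k) * (1 - N) =
      -((∑ k ∈ Finset.range (T+1), N ^ k) * (N - 1)) := by noncomm_ring
  rw [this, h]; simp

lemma lead_pow_eq {T a t : ℕ} (ht : t + 1 ≤ T + 1)
    {N N' : Matrix (Fin (T+1) × Fin a) (Fin (T+1) × Fin a) ℝ}
    (hN : IsBLT N) (hN' : IsBLT N') (he : lead t ht N = lead t ht N') :
    ∀ k, lead t ht (N ^ k) = lead t ht (N' ^ k) := by
  intro k
  induction k with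
  | zero => rw [pow_zero, pow_zero]
  | succ k ih =>
    rw [pow_succ, pow_succ]
    exact lead_mul_eq ht (hN.pow' k) (hN'.pow' k) ih he
theorem stmt9 {T n m p t : ℕ} (ht : t + 1 ≤ T + 1)
    (A A' : Matrix (Fin (T+1) × Fin n) (Fin (T+1) × Fin n) ℝ)
    (B B' : Matrix (Fin (T+1) × Fin n) (Fin (T+1) × Fin p) ℝ)
    (C C' : Matrix (Fin (T+1) × Fin m) (Fin (T+1) × Fin n) ℝ)
    (K K' : Matrix (Fin (T+1) × Fin p) (Fin (T+1) × Fin m) ℝ)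
    (hA : IsBD A) (hB : IsBD B) (hC : IsBD C) (hK : IsBLT K)
    (hA' : IsBD A') (hB' : IsBD B') (hC' : IsBD C') (hK' : IsBLT K')
    (heA : lead t ht A = lead t ht A') (heB : lead t ht B = lead t ht B')
    (heC : lead t ht C = lead t ht C') (heK : lead t ht K = lead t ht K')
    (Φxx Φxx' : Matrix (Fin (T+1) × Fin n) (Fin (T+1) × Fin n) ℝ)
    (Φxy Φxy' : Matrix (Fin (T+1) × Fin n) (Fin (T+1) × Fin m) ℝ)
    (Φux Φux' : Matrix (Fin (T+1) × Fin p) (Fin (T+1) × Fin n) ℝ)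
    (Φuy Φuy' : Matrix (Fin (T+1) × Fin p) (Fin (T+1) × Fin m) ℝ)
    (hΦxx : Φxx = (1 - dshift n T * (A + B * K * C))⁻¹)
    (hΦxy : Φxy = Φxx * dshift n T * B * K)
    (hΦux : Φux = K * C * Φxx)
    (hΦuy : Φuy = K + K * C * Φxx * dshift n T * B * K)
    (hΦxx' : Φxx' = (1 - dshift n T * (A' + B' * K' * C'))⁻¹)
    (hΦxy' : Φxy' = Φxx' * dshift n T * B' * K')
    (hΦux' : Φux' = K' * C' * Φxx')
    (hΦuy' : Φuy' = K' + K' * C' * Φxx' * dshift n T * B' * K') :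
    lead t ht Φxx = lead t ht Φxx' ∧ lead t ht Φxy = lead t ht Φxy' ∧
      lead t ht Φux = lead t ht Φux' ∧ lead t ht Φuy = lead t ht Φuy' := by
  have hZs : IsStrictBLT (dshift n T) := by
    rintro q r h
    simp only [dshift]
    rw [if_neg]
    rintro ⟨h1, -⟩
    have := Fin.le_def.mp h
    omega
  have hM : IsBLT (A + B * K * C) := hA.blt.add' ((hB.blt.mul' hK).mul' hC.blt)
  have hM' : IsBLT (A' + B' * K' * C') := hA'.blt.add' ((hB'.blt.mul' hK').mul' hC'.blt)
  have hNs : IsStrictBLT (dshift n T * (A + B * K * C)) := hZs.mulBLT hM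
  have hN's : IsStrictBLT (dshift n T * (A' + B' * K' * C')) := hZs.mulBLT hM'
  have heN : lead t ht (dshift n T * (A + B * K * C)) =
      lead t ht (dshift n T * (A' + B' * K' * C')) := by
    apply lead_mul_eq ht hZs.blt hZs.blt rfl
    have e0 : lead t ht (B * K * C) = lead t ht (B' * K' * C') :=
      lead_mul_eq ht (hB.blt.mul' hK) (hB'.blt.mul' hK')
        (lead_mul_eq ht hB.blt hB'.blt heB heK) heC
    rw [lead_add', lead_add', heA, e0]
  have hxxeq : Φxx = ∑ k ∈ Finset.range (T+1), (dshift n T * (A + B * K * C)) ^ k := by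
    rw [hΦxx]; exact strict_inv_eq_geom hNs
  have hxxeq' : Φxx' = ∑ k ∈ Finset.range (T+1), (dshift n T * (A' + B' * K' * C')) ^ k := by
    rw [hΦxx']; exact strict_inv_eq_geom hN's
  have hΦxxB : IsBLT Φxx := hxxeq ▸ hNs.blt.sumpow
  have hΦxxB' : IsBLT Φxx' := hxxeq' ▸ hN's.blt.sumpow
  have e1 : lead t ht Φxx = lead t ht Φxx' := by
    rw [hxxeq, hxxeq', lead_sum', lead_sum']
    exact Finset.sum_congr rfl fun k _ => lead_pow_eq ht hNs.blt hN's.blt heN k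
  have eKCx : lead t ht (K * C * Φxx) = lead t ht (K' * C' * Φxx') :=
    lead_mul_eq ht (hK.mul' hC.blt) (hK'.mul' hC'.blt)
      (lead_mul_eq ht hK hK' heK heC) e1
  refine ⟨e1, ?_, ?_, ?_⟩
  · rw [hΦxy, hΦxy']
    exact lead_mul_eq ht ((hΦxxB.mul' hZs.blt).mul' hB.blt)
      ((hΦxxB'.mul' hZs.blt).mul' hB'.blt)
      (lead_mul_eq ht (hΦxxB.mul' hZs.blt) (hΦxxB'.mul' hZs.blt)
        (lead_mul_eq ht hΦxxB hΦxxB' e1 rfl) heB) heK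
  · rw [hΦux, hΦux']; exact eKCx
  · have h1 : IsBLT (K * C * Φxx) := (hK.mul' hC.blt).mul' hΦxxB
    have h1' : IsBLT (K' * C' * Φxx') := (hK'.mul' hC'.blt).mul' hΦxxB'
    have e2 : lead t ht (K * C * Φxx * dshift n T * B * K) =
        lead t ht (K' * C' * Φxx' * dshift n T * B' * K') :=
      lead_mul_eq ht ((h1.mul' hZs.blt).mul' hB.blt) ((h1'.mul' hZs.blt).mul' hB'.blt)
        (lead_mul_eq ht (h1.mul' hZs.blt) (h1'.mul' hZs.blt)
          (lead_mul_eq ht h1 h1' eKCx rfl) heB) heK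
    rw [hΦuy, hΦuy', lead_add', lead_add', heK, e2]
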